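/- arXiv:1602.05189 — 4 statements merged into one kernel-verified Lean document; each statement's English description precedes it below -/
import Mathlib

section
/- Let τ be the coalescent time of two uniformly sampled tips in a Yule n-tree with rate 1: conditionally on coalescing at the k-th speciation event (probability π_{n,k} = 2(n+1)/((n-1)(k+1)(k+2))), τ = T_{k+1} + ⋯ + T_n with independent T_j ~ Exp(j). Then for x > 0 with x ≠ 1, E[exp(-x·τ)] = (2 - (n+1)(x+1)b_{n,x})/((n-1)(x-1)), where b_{n,x} = ∏_{j=1}^n j/(j+x). -/
open scoped BigOperators

/-- `b n x = ∏_{j=1}^n j/(j+x)`. -/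
noncomputable def b (n : ℕ) (x : ℝ) : ℝ := ∏ j ∈ Finset.Icc 1 n, (j : ℝ) / (j + x)

/-- `π_{n,k} = 2(n+1)/((n-1)(k+1)(k+2))`, the probability that a random pair of tips
coalesced at the k-th speciation event. -/
noncomputable def piYule (n k : ℕ) : ℝ :=
  2 * ((n : ℝ) + 1) / (((n : ℝ) - 1) * ((k : ℝ) + 1) * ((k : ℝ) + 2))

lemma b_pos (n : ℕ) {x : ℝ} (hx : 0 < x) : 0 < b n x := by
  unfold b
  apply Finset.prod_pos
  intro j hj
  have hj1 : 1 ≤ j := (Finset.mem_Icc.mp hj).1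
  have hj' : (0:ℝ) < j := by exact_mod_cast hj1
  positivity

lemma b_succ (n : ℕ) (x : ℝ) :
    b (n+1) x = b n x * (((n:ℝ)+1) / (((n:ℝ)+1) + x)) := by
  unfold b
  rw [Finset.prod_Icc_succ_top (by omega)]
  push_cast
  ring

lemma sumA (x : ℝ) (hx : 0 < x) (hx1 : x ≠ 1) : ∀ m : ℕ, 1 ≤ m →
    ∑ k ∈ Finset.Icc 1 m, 1 / (((k:ℝ)+1) * ((k:ℝ)+2) * b k x) =
      (1 / (((m:ℝ)+2) * b (m+1) x) - (x+1)/2) / (x-1) := by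
  intro m hm
  have hx1' : x - 1 ≠ 0 := sub_ne_zero.mpr hx1
  induction m, hm using Nat.le_induction with
  | base =>
    have hb1 : b 1 x = 1 / (1 + x) := by
      simp [b]
    have hb2 : b 2 x = b 1 x * (2 / (2 + x)) := by
      rw [show (2:ℕ) = 1 + 1 from rfl, b_succ 1 x]; norm_num
    rw [show (1:ℕ) + 1 = 2 from rfl, hb2, hb1]
    have h1 : (1:ℝ) + x ≠ 0 := by positivity
    have h2 : (2:ℝ) + x ≠ 0 := by positivity
    simp only [Finset.Icc_self, Finset.sum_singleton, Nat.cast_one, hb1]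
    field_simp
    ring
  | succ m hm ih =>
    rw [Finset.sum_Icc_succ_top (by omega : 1 ≤ m + 1), ih,
        b_succ (m+1) x, b_succ m x]
    have hb : b m x ≠ 0 := ne_of_gt (b_pos m hx)
    have h1 : ((m:ℝ)+1) + x ≠ 0 := by positivity
    have h2 : ((m:ℝ)+1+1) + x ≠ 0 := by positivity
    have h3 : (m:ℝ)+1 ≠ 0 := by positivity
    have h4 : (m:ℝ)+2 ≠ 0 := by positivity
    have h5 : (m:ℝ)+3 ≠ 0 := by positivity
    push_cast
    field_simp
    ring

/-- Laplace transform of the pairwise coalescent time τ of a Yule n-tree: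
conditionally on coalescing at the k-th speciation event, `E[e^{-xτ} | k] = b_{n,x}/b_{k,x}`,
hence `E[e^{-xτ}] = Σ_{k=1}^{n-1} π_{n,k}·b_{n,x}/b_{k,x}`, and for `x > 0`, `x ≠ 1`, this
equals `(2 - (n+1)(x+1)b_{n,x})/((n-1)(x-1))`. -/
theorem stmt_4 (n : ℕ) (hn : 2 ≤ n) (x : ℝ) (hx : 0 < x) (hx1 : x ≠ 1) :
    ∑ k ∈ Finset.Icc 1 (n - 1), piYule n k * (b n x / b k x) =
      (2 - ((n : ℝ) + 1) * (x + 1) * b n x) / (((n : ℝ) - 1) * (x - 1)) := by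
  have hx1' : x - 1 ≠ 0 := sub_ne_zero.mpr hx1
  have hn1 : (1:ℝ) ≤ (n:ℝ) - 1 := by
    have : (2:ℝ) ≤ (n:ℝ) := by exact_mod_cast hn
    linarith
  have hnne : (n:ℝ) - 1 ≠ 0 := by linarith
  have hstep : ∀ k ∈ Finset.Icc 1 (n-1),
      piYule n k * (b n x / b k x) =
        (2 * ((n:ℝ)+1) / ((n:ℝ)-1) * b n x) * (1 / (((k:ℝ)+1) * ((k:ℝ)+2) * b k x)) := by
    intro k hk
    have hk1 : 1 ≤ k := (Finset.mem_Icc.mp hk).1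
    have hbk : b k x ≠ 0 := ne_of_gt (b_pos k hx)
    have hk2 : (k:ℝ)+1 ≠ 0 := by positivity
    have hk3 : (k:ℝ)+2 ≠ 0 := by positivity
    unfold piYule
    field_simp
    try ring
    try exact Or.inl trivial
  rw [Finset.sum_congr rfl hstep, ← Finset.mul_sum,
      sumA x hx hx1 (n-1) (by omega)]
  have hcast : ((n-1 : ℕ) : ℝ) = (n:ℝ) - 1 := by
    have : 1 ≤ n := by omega
    push_cast [this]
    ring
  have hsn : n - 1 + 1 = n := by omega
  rw [hsn, hcast]
  have hbn : b n x ≠ 0 := ne_of_gt (b_pos n hx)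
  have hnp : (n:ℝ) + 1 ≠ 0 := by positivity
  field_simp
  ring
end

section
/- With τ the coalescent time of a random pair of tips in a Yule n-tree with rate 1, E[exp(-τ)] = (2/(n-1))(H_n - 1) - 1/(n+1), where H_n is the n-th harmonic number. -/
open scoped BigOperators

/-- The n-th harmonic number `H_n = Σ_{k=1}^n 1/k`. -/
noncomputable def harmonic' (n : ℕ) : ℝ := ∑ k ∈ Finset.Icc 1 n, (1 : ℝ) / k

/-! The product `b m 1 = ∏ j/(j+1)` telescopes to `1/(m+1)`, so each summand `π_{n,k} b_{n,1}/b_{k,1}`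
collapses to `2/((n-1)(k+2))`; the sum is then a tail of the harmonic series, `H_{n+1} - 3/2`. -/

theorem b_one (m : ℕ) : b m 1 = 1 / ((m : ℝ) + 1) := by
  induction m with
  | zero => simp [b]
  | succ m ih =>
    rw [b, Finset.prod_Icc_succ_top (Nat.le_add_left 1 m), ← b, ih]
    push_cast
    field_simp

theorem harmonic'_succ (n : ℕ) : harmonic' (n + 1) = harmonic' n + 1 / ((n : ℝ) + 1) := by
  rw [harmonic', harmonic', Finset.sum_Icc_succ_top (Nat.le_add_left 1 n)]
  push_cast
  rfl

theorem sum_Icc_one_div_add_two (m : ℕ) :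
    ∑ k ∈ Finset.Icc 1 m, 1 / ((k : ℝ) + 2) = harmonic' (m + 2) - 3 / 2 := by
  induction m with
  | zero => norm_num [harmonic', Finset.sum_Icc_succ_top]
  | succ m ih =>
    rw [Finset.sum_Icc_succ_top (Nat.le_add_left 1 m), ih, harmonic'_succ (m + 2)]
    push_cast
    ring

theorem piYule_mul_b_one_div (n k : ℕ) :
    piYule n k * (b n 1 / b k 1) = 2 / ((n : ℝ) - 1) * (1 / ((k : ℝ) + 2)) := by
  rw [piYule, b_one, b_one]
  field_simp

/-- With τ the coalescent time of a random pair of tips in a Yule n-tree (rate 1),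
`E[e^{-τ}] = Σ_{k=1}^{n-1} π_{n,k}·b_{n,1}/b_{k,1} = (2/(n-1))(H_n - 1) - 1/(n+1)`. -/
theorem stmt_5 (n : ℕ) (hn : 2 ≤ n) :
    ∑ k ∈ Finset.Icc 1 (n - 1), piYule n k * (b n 1 / b k 1) =
      (2 / ((n : ℝ) - 1)) * (harmonic' n - 1) - 1 / ((n : ℝ) + 1) := by
  obtain ⟨m, rfl⟩ : ∃ m, n = m + 1 + 1 := ⟨n - 2, by omega⟩
  simp_rw [piYule_mul_b_one_div, ← Finset.mul_sum, Nat.add_sub_cancel,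
    sum_Icc_one_div_add_two, harmonic'_succ (m + 1 + 1)]
  push_cast
  field_simp
  ring
end

section
/- For u > 0, if (a_n) is a bounded sequence of nonnegative reals converging to 0 in density (i.e., there is a set E ⊂ ℕ of natural density 0 such that a_n → 0 along n ∉ E), then n^{-u} Σ_{i=1}^{n-1} a_i i^{u-1} → 0 as n → ∞. -/
/-!
Convergence in density forces the Cesàro means `(1/n) ∑_{k<n} a_k` of a bounded sequence to
tend to `0`. To pass to the weights `i^(u-1)`, split the sum at `δ n`: since
`∑_{i ≤ m} i^(u-1) ≤ (1 + 1/u) m^u`, the indices below `δ n` contribute at most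
`A (1 + 1/u) δ^u` to the normalised sum, while above `δ n` the weight is at most
`(δ^(u-1) + 1) n^(u-1)`, so those indices contribute a multiple of the Cesàro mean.
-/

open scoped BigOperators
open Filter

/-- A set `E ⊆ ℕ` has natural density 0 if `(1/n)·|E ∩ {0,…,n-1}| → 0`. -/
def HasDensityZero (E : Set ℕ) : Prop :=
  Tendsto (fun n : ℕ =>
    (∑ k ∈ Finset.range n, Set.indicator E (fun _ => (1 : ℝ)) k) / n) atTop (nhds 0)

open Finset Topology

lemma tendsto_zero_of_forall_eventually_le_add {α : Type*} {l : Filter α} {f : α → ℝ}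
    (hf : ∀ x, 0 ≤ f x)
    (h : ∀ ε > 0, ∃ g : α → ℝ, Tendsto g l (𝓝 0) ∧ ∀ᶠ x in l, f x ≤ ε + g x) :
    Tendsto f l (𝓝 0) := by
  refine tendsto_order.2 ⟨fun c hc => .of_forall fun x => hc.trans_le (hf x), fun ε hε => ?_⟩
  obtain ⟨g, hg, hfg⟩ := h (ε / 2) (half_pos hε)
  filter_upwards [hfg, hg.eventually (gt_mem_nhds (half_pos hε))] with x hfx hgx
  linarith

namespace Real

variable {u : ℝ}

lemma mul_rpow_sub_one_le_rpow_sub_rpow (hu₀ : 0 ≤ u) (hu₁ : u ≤ 1) {x : ℝ} (hx : 1 ≤ x) :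
    u * x ^ (u - 1) ≤ x ^ u - (x - 1) ^ u := by
  have hx₀ : 0 < x := one_pos.trans_le hx
  -- Bernoulli's inequality `(1 - 1/x)^u ≤ 1 - u/x`, multiplied by `x^u`.
  have hbern := rpow_one_add_le_one_add_mul_self (s := -x⁻¹)
    (by linarith [inv_le_one_of_one_le₀ hx]) hu₀ hu₁
  have h1 : x ^ u * (1 + -x⁻¹) ^ u = (x - 1) ^ u := by
    rw [← mul_rpow hx₀.le (by linarith [inv_le_one_of_one_le₀ hx])]
    congr 1
    field_simp
    ring
  have h2 : x ^ u * x⁻¹ = x ^ (u - 1) := by rw [rpow_sub_one hx₀.ne', div_eq_mul_inv]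
  nlinarith [mul_le_mul_of_nonneg_left hbern (rpow_nonneg hx₀.le u)]

lemma sum_Icc_rpow_sub_one_le_of_le_one (hu₀ : 0 < u) (hu₁ : u ≤ 1) (m : ℕ) :
    ∑ i ∈ Icc 1 m, (i : ℝ) ^ (u - 1) ≤ (m : ℝ) ^ u / u := by
  induction m with
  | zero => simp [zero_rpow hu₀.ne']
  | succ k ih =>
    rw [sum_Icc_succ_top (by omega), le_div_iff₀ hu₀]
    have hstep := mul_rpow_sub_one_le_rpow_sub_rpow hu₀.le hu₁ (x := (k + 1 : ℕ))
      (by exact_mod_cast Nat.le_add_left 1 k)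
    rw [le_div_iff₀ hu₀] at ih
    push_cast at hstep ⊢
    simp only [add_sub_cancel_right] at hstep
    linarith

lemma sum_Icc_rpow_sub_one_le_of_one_le (hu : 1 ≤ u) (m : ℕ) :
    ∑ i ∈ Icc 1 m, (i : ℝ) ^ (u - 1) ≤ (m : ℝ) ^ u := by
  calc ∑ i ∈ Icc 1 m, (i : ℝ) ^ (u - 1)
      ≤ ∑ _i ∈ Icc 1 m, (m : ℝ) ^ (u - 1) := by
        refine sum_le_sum fun i hi => rpow_le_rpow (Nat.cast_nonneg i) ?_ (by linarith)
        exact_mod_cast (mem_Icc.1 hi).2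
    _ = (m : ℝ) ^ u := by
        rcases Nat.eq_zero_or_pos m with rfl | hm
        · simp [zero_rpow (by linarith : u ≠ 0)]
        have hm' : (m : ℝ) ≠ 0 := by positivity
        rw [sum_const, Nat.card_Icc, nsmul_eq_mul, Nat.add_sub_cancel, rpow_sub_one hm']
        field_simp

lemma sum_Icc_rpow_sub_one_le (hu : 0 < u) (m : ℕ) :
    ∑ i ∈ Icc 1 m, (i : ℝ) ^ (u - 1) ≤ (1 + u⁻¹) * (m : ℝ) ^ u := by
  have hmu : 0 ≤ (m : ℝ) ^ u := rpow_nonneg (Nat.cast_nonneg m) u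
  rcases le_total u 1 with hu₁ | hu₁
  · calc _ ≤ (m : ℝ) ^ u / u := sum_Icc_rpow_sub_one_le_of_le_one hu hu₁ m
      _ ≤ _ := by rw [div_eq_inv_mul]; gcongr; linarith
  · calc _ ≤ (m : ℝ) ^ u := sum_Icc_rpow_sub_one_le_of_one_le hu₁ m
      _ ≤ _ := le_mul_of_one_le_left hmu (by linarith [inv_pos.2 hu])

lemma rpow_sub_one_le_of_mul_le {δ x y : ℝ} (hδ : 0 < δ) (hx : 0 < x) (hδx : δ * y ≤ x)
    (hxy : x ≤ y) : x ^ (u - 1) ≤ (δ ^ (u - 1) + 1) * y ^ (u - 1) := by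
  have hy : 0 < y := hx.trans_le hxy
  rcases le_total u 1 with hu | hu
  · calc x ^ (u - 1) ≤ (δ * y) ^ (u - 1) :=
          rpow_le_rpow_of_nonpos (by positivity) hδx (by linarith)
      _ ≤ _ := by rw [mul_rpow hδ.le hy.le]; gcongr; linarith
  · calc x ^ (u - 1) ≤ y ^ (u - 1) := rpow_le_rpow hx.le hxy (by linarith)
      _ ≤ _ := le_mul_of_one_le_left (by positivity) (by linarith [rpow_nonneg hδ.le (u - 1)])

end Real

noncomputable def cesaroMean (b : ℕ → ℝ) (n : ℕ) : ℝ := (∑ k ∈ range n, b k) / n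

noncomputable def powerWeightedMean (u : ℝ) (b : ℕ → ℝ) (n : ℕ) : ℝ :=
  (n : ℝ) ^ (-u) * ∑ i ∈ Icc 1 (n - 1), b i * (i : ℝ) ^ (u - 1)

section

variable {u : ℝ} {b : ℕ → ℝ}

lemma cesaroMean_nonneg (hb : ∀ k, 0 ≤ b k) (n : ℕ) : 0 ≤ cesaroMean b n :=
  div_nonneg (sum_nonneg fun k _ => hb k) n.cast_nonneg

lemma powerWeightedMean_nonneg (hb : ∀ k, 0 ≤ b k) (n : ℕ) : 0 ≤ powerWeightedMean u b n :=
  mul_nonneg (Real.rpow_nonneg n.cast_nonneg _)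
    (sum_nonneg fun i _ => mul_nonneg (hb i) (Real.rpow_nonneg i.cast_nonneg _))

lemma sum_Icc_mul_rpow_sub_one_le {B δ : ℝ} (hu : 0 < u) (hδ : 0 < δ) (hb₀ : ∀ k, 0 ≤ b k)
    (hbB : ∀ k, b k ≤ B) (n : ℕ) :
    ∑ i ∈ Icc 1 (n - 1), b i * (i : ℝ) ^ (u - 1) ≤
      B * (1 + u⁻¹) * (δ * n) ^ u + (δ ^ (u - 1) + 1) * (n : ℝ) ^ (u - 1) * ∑ k ∈ range n, b k := by
  have hB : 0 ≤ B := (hb₀ 0).trans (hbB 0)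
  set m := ⌊δ * n⌋₊
  rw [← sum_filter_add_sum_filter_not (Icc 1 (n - 1)) (· ≤ m)]
  gcongr ?_ + ?_
  · calc ∑ i ∈ Icc 1 (n - 1) with i ≤ m, b i * (i : ℝ) ^ (u - 1)
        ≤ ∑ i ∈ Icc 1 m, B * (i : ℝ) ^ (u - 1) := by
          refine sum_le_sum_of_subset_of_nonneg ?_ ?_ |>.trans' (sum_le_sum fun i _ => ?_)
          · intro i hi
            simp only [mem_filter, mem_Icc] at hi ⊢
            omega
          · intros; positivity
          · exact mul_le_mul_of_nonneg_right (hbB i) (by positivity)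
      _ ≤ B * ((1 + u⁻¹) * (δ * n) ^ u) := by
          rw [← mul_sum]
          gcongr
          refine (Real.sum_Icc_rpow_sub_one_le hu m).trans ?_
          gcongr
          exact Nat.floor_le (by positivity)
      _ = _ := by ring
  · calc ∑ i ∈ Icc 1 (n - 1) with ¬i ≤ m, b i * (i : ℝ) ^ (u - 1)
        ≤ ∑ i ∈ Icc 1 (n - 1) with ¬i ≤ m, b i * ((δ ^ (u - 1) + 1) * (n : ℝ) ^ (u - 1)) := by
          refine sum_le_sum fun i hi => mul_le_mul_of_nonneg_left ?_ (hb₀ i)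
          simp only [mem_filter, mem_Icc, not_le] at hi
          refine Real.rpow_sub_one_le_of_mul_le hδ (by exact_mod_cast hi.1.1) ?_
            (by exact_mod_cast hi.1.2.trans (Nat.sub_le n 1))
          exact (Nat.lt_floor_add_one _).le.trans (by exact_mod_cast hi.2)
      _ ≤ _ := by
          rw [← sum_mul, mul_comm]
          gcongr
          · exact fun i _ _ => hb₀ i
          · intro i hi
            simp only [mem_filter, mem_Icc, mem_range] at hi ⊢
            omega

lemma powerWeightedMean_le {B δ : ℝ} (hu : 0 < u) (hδ : 0 < δ) (hb₀ : ∀ k, 0 ≤ b k)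
    (hbB : ∀ k, b k ≤ B) (n : ℕ) :
    powerWeightedMean u b n ≤ B * (1 + u⁻¹) * δ ^ u + (δ ^ (u - 1) + 1) * cesaroMean b n := by
  rcases Nat.eq_zero_or_pos n with rfl | hn
  · have hB : 0 ≤ B := (hb₀ 0).trans (hbB 0)
    simp only [powerWeightedMean, cesaroMean, CharP.cast_eq_zero, zero_tsub, Order.lt_one_iff,
      Icc_eq_empty_of_lt, sum_empty, mul_zero, range_zero, div_zero, add_zero]
    positivity
  have hn' : (n : ℝ) ≠ 0 := by positivity
  calc powerWeightedMean u b n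
      ≤ (n : ℝ) ^ (-u) * (B * (1 + u⁻¹) * (δ * n) ^ u
          + (δ ^ (u - 1) + 1) * (n : ℝ) ^ (u - 1) * ∑ k ∈ range n, b k) :=
        mul_le_mul_of_nonneg_left (sum_Icc_mul_rpow_sub_one_le hu hδ hb₀ hbB n) (by positivity)
    _ = _ := by
        rw [cesaroMean, Real.mul_rpow hδ.le n.cast_nonneg, Real.rpow_neg n.cast_nonneg,
          Real.rpow_sub_one hn']
        field_simp

theorem tendsto_powerWeightedMean_of_tendsto_cesaroMean {B : ℝ} (hu : 0 < u)
    (hb₀ : ∀ k, 0 ≤ b k) (hbB : ∀ k, b k ≤ B) (hb : Tendsto (cesaroMean b) atTop (𝓝 0)) :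
    Tendsto (powerWeightedMean u b) atTop (𝓝 0) := by
  refine tendsto_zero_of_forall_eventually_le_add (powerWeightedMean_nonneg hb₀) fun ε hε => ?_
  have hB : 0 ≤ B := (hb₀ 0).trans (hbB 0)
  set C := B * (1 + u⁻¹)
  have hC : 0 ≤ C := by positivity
  -- `δ` is chosen so that `C * δ ^ u ≤ ε`.
  set δ := (ε / (C + 1)) ^ u⁻¹
  have hδ : 0 < δ := by positivity
  refine ⟨fun n => (δ ^ (u - 1) + 1) * cesaroMean b n, by simpa using hb.const_mul _,
    .of_forall fun n => (powerWeightedMean_le hu hδ hb₀ hbB n).trans ?_⟩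
  gcongr
  rw [Real.rpow_inv_rpow (by positivity) hu.ne', mul_div_assoc']
  exact div_le_of_le_mul₀ (by positivity) hε.le (by nlinarith)

theorem tendsto_cesaroMean_of_tendsto_inf_principal {a : ℕ → ℝ} {A : ℝ} {E : Set ℕ}
    (ha₀ : ∀ k, 0 ≤ a k) (haA : ∀ k, a k ≤ A) (hE : HasDensityZero E)
    (ha : Tendsto a (atTop ⊓ 𝓟 Eᶜ) (𝓝 0)) :
    Tendsto (cesaroMean a) atTop (𝓝 0) := by
  refine tendsto_zero_of_forall_eventually_le_add (cesaroMean_nonneg ha₀) fun ε hε => ?_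
  have hA : 0 ≤ A := (ha₀ 0).trans (haA 0)
  obtain ⟨N, hN⟩ := eventually_atTop.1 <| eventually_inf_principal.1 <|
    ha.eventually (ge_mem_nhds hε)
  have hE' : Tendsto (cesaroMean (E.indicator fun _ => 1)) atTop (𝓝 0) := hE
  have hg := (tendsto_const_div_atTop_nhds_zero_nat (∑ k ∈ range N, a k)).add (hE'.const_mul A)
  refine ⟨fun n => (∑ k ∈ range N, a k) / n + A * cesaroMean (E.indicator fun _ => 1) n,
    by simpa using hg, ?_⟩
  filter_upwards [eventually_ge_atTop (max N 1)] with n hn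
  have hN' : N ≤ n := le_of_max_le_left hn
  have hn : (n : ℝ) ≠ 0 := by have := le_of_max_le_right hn; positivity
  have hdom : ∀ k, N ≤ k → a k ≤ ε + A * E.indicator (fun _ => 1) k := by
    intro k hk
    by_cases hkE : k ∈ E
    · simpa [hkE] using (haA k).trans (le_add_of_nonneg_left hε.le)
    · simpa [hkE] using hN k hk hkE
  calc cesaroMean a n = (∑ k ∈ range N, a k + ∑ k ∈ Ico N n, a k) / n := by
        rw [cesaroMean, sum_range_add_sum_Ico _ hN']
    _ ≤ (∑ k ∈ range N, a k + ∑ k ∈ range n, (ε + A * E.indicator (fun _ => 1) k)) / n := by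
        gcongr
        refine (sum_le_sum fun k hk => hdom k (mem_Ico.1 hk).1).trans
          (sum_le_sum_of_subset_of_nonneg ?_ fun k _ _ => ?_)
        · intro k hk
          simp only [mem_Ico, mem_range] at hk ⊢
          omega
        · exact add_nonneg hε.le (mul_nonneg hA (Set.indicator_nonneg (fun _ _ => zero_le_one) k))
    _ = ε + ((∑ k ∈ range N, a k) / n + A * cesaroMean (E.indicator fun _ => 1) n) := by
        rw [cesaroMean, sum_add_distrib, sum_const, card_range, nsmul_eq_mul, ← mul_sum]
        field_simp
        ring

end

/-- For `u > 0`, if `(a_n)` is a bounded sequence of nonnegative reals converging to 0 in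
density (there is a density-0 set `E` with `a_n → 0` along `n ∉ E`), then
`n^{-u} Σ_{i=1}^{n-1} a_i i^{u-1} → 0`. -/
theorem stmt_11 (u : ℝ) (hu : 0 < u) (a : ℕ → ℝ)
    (ha_nonneg : ∀ n, 0 ≤ a n) (A : ℝ) (ha_bdd : ∀ n, a n ≤ A)
    (E : Set ℕ) (hE : HasDensityZero E)
    (hconv : Tendsto a (atTop ⊓ Filter.principal Eᶜ) (nhds 0)) :
    Tendsto (fun n : ℕ =>
        (n : ℝ) ^ (-u) * ∑ i ∈ Finset.Icc 1 (n - 1), a i * (i : ℝ) ^ (u - 1))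
      atTop (nhds 0) :=
  tendsto_powerWeightedMean_of_tendsto_cesaroMean hu ha_nonneg ha_bdd
    (tendsto_cesaroMean_of_tendsto_inf_principal ha_nonneg ha_bdd hE hconv)
end

section
/- For u > 0, if (a_n) is a bounded nonnegative sequence that does NOT converge to 0 with density 1, then limsup_n n^{-u} Σ_{i=1}^{n-1} a_i i^{u-1} > 0. -/
open scoped BigOperators
open Filter

/-- `a_n → 0` with density 1 iff there is a density-0 set `E` with `a_n → 0` along `n ∉ E`. -/
def TendstoZeroDensityOne (a : ℕ → ℝ) : Prop :=
  ∃ E : Set ℕ, HasDensityZero E ∧ Tendsto a (atTop ⊓ Filter.principal Eᶜ) (nhds 0)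

/-!
If the limsup vanished, the averages, which are bounded because `∑_{i<n} i^(u-1) = O(n^u)`,
would tend to `0`. For `ε, θ > 0`, each index `k ∈ [θn, n)` with `a k ≥ ε` contributes at least
`ε · min 1 (θ^(u-1)) · n^(u-1)` to `∑_{i<n} a i · i^(u-1) = o(n^u)`, so there are `o(n)` such
indices: every level set `{a ≥ ε}` has density zero. A diagonal argument then merges the level sets
`{a ≥ 1/(k+1)}` into a single density-zero set off which `a → 0`.
-/

open Topology

theorem min_one_mul_rpow_sub_one_le_rpow_sub_rpow {u x : ℝ} (hu : 0 < u) (hx : 1 ≤ x) :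
    min 1 u * x ^ (u - 1) ≤ x ^ u - (x - 1) ^ u := by
  have hx0 : 0 < x := one_pos.trans_le hx
  have hpow : x ^ u = x * x ^ (u - 1) := by
    rw [← Real.rpow_one_add' hx0.le (by linarith)]; ring_nf
  rcases le_total 1 u with h1u | hu1
  · have hsub : (x - 1) ^ u ≤ (x - 1) * x ^ (u - 1) := by
      calc (x - 1) ^ u = (x - 1) * (x - 1) ^ (u - 1) := by
            rw [← Real.rpow_one_add' (by linarith) (by linarith)]; ring_nf
        _ ≤ (x - 1) * x ^ (u - 1) := by
            gcongr
            linarith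
    have := Real.rpow_nonneg hx0.le (u - 1)
    rw [min_eq_left h1u]; nlinarith
  · have hbern : (1 + -x⁻¹) ^ u ≤ 1 + u * -x⁻¹ :=
      rpow_one_add_le_one_add_mul_self (by linarith [inv_le_one_of_one_le₀ hx]) hu.le hu1
    have hfac : (x - 1) ^ u = x ^ u * (1 + -x⁻¹) ^ u := by
      rw [← Real.mul_rpow hx0.le (by linarith [inv_le_one_of_one_le₀ hx])]
      congr 1; field_simp; ring
    have hxu : x ^ u * x⁻¹ = x ^ (u - 1) := by
      rw [hpow]; field_simp
    rw [min_eq_right hu1, hfac]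
    nlinarith [mul_le_mul_of_nonneg_left hbern (Real.rpow_nonneg hx0.le u)]

theorem min_one_rpow_mul_rpow_le_rpow {p θ x y : ℝ} (hθ : 0 < θ) (hx : 0 ≤ x) (hy : 0 < y)
    (hθy : θ * x ≤ y) (hyx : y ≤ x) : min 1 (θ ^ p) * x ^ p ≤ y ^ p := by
  rcases le_total 0 p with hp | hp
  · calc min 1 (θ ^ p) * x ^ p ≤ θ ^ p * x ^ p := by gcongr; exact min_le_right _ _
      _ = (θ * x) ^ p := (Real.mul_rpow hθ.le hx).symm
      _ ≤ y ^ p := by gcongr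
  · calc min 1 (θ ^ p) * x ^ p ≤ 1 * x ^ p := by gcongr; exact min_le_left _ _
      _ ≤ y ^ p := by rw [one_mul]; exact Real.rpow_le_rpow_of_nonpos hy hyx hp

theorem min_one_mul_sum_Icc_rpow_le {u : ℝ} (hu : 0 < u) (m : ℕ) :
    min 1 u * ∑ i ∈ Finset.Icc 1 m, (i : ℝ) ^ (u - 1) ≤ (m : ℝ) ^ u := by
  induction m with
  | zero => simp [Real.zero_rpow hu.ne']
  | succ m ih =>
    have hstep := min_one_mul_rpow_sub_one_le_rpow_sub_rpow hu (x := (m + 1 : ℕ)) (by simp)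
    rw [Finset.sum_Icc_succ_top (by omega), mul_add]
    push_cast at hstep ⊢
    simp only [add_sub_cancel_right] at hstep
    linarith

noncomputable def countBelow (E : Set ℕ) (n : ℕ) : ℝ :=
  ∑ k ∈ Finset.range n, E.indicator (fun _ => (1 : ℝ)) k

section CountBelow

variable {E F : Set ℕ} {n : ℕ}

theorem hasDensityZero_iff : HasDensityZero E ↔ Tendsto (fun n => countBelow E n / n) atTop (𝓝 0) :=
  Iff.rfl

theorem countBelow_nonneg : 0 ≤ countBelow E n :=
  Finset.sum_nonneg fun _ _ => Set.indicator_nonneg (fun _ _ => zero_le_one) _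

theorem countBelow_le_self : countBelow E n ≤ n :=
  calc countBelow E n ≤ ∑ _k ∈ Finset.range n, (1 : ℝ) :=
        Finset.sum_le_sum fun _ _ => Set.indicator_le_self' (fun _ _ => zero_le_one) _
    _ = n := by simp

theorem countBelow_le_countBelow (h : ∀ m < n, m ∈ E → m ∈ F) :
    countBelow E n ≤ countBelow F n :=
  Finset.sum_le_sum fun m hm => Set.indicator_apply_le'
    (fun hmE => (Set.indicator_of_mem (h m (Finset.mem_range.mp hm) hmE) (fun _ => (1 : ℝ))).ge)
    (fun _ => Set.indicator_nonneg (fun _ _ => zero_le_one) _)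

end CountBelow

theorem sum_indicator_filter_lt_le (E : Set ℕ) {x : ℝ} (hx : 0 ≤ x) (n : ℕ) :
    ∑ k ∈ Finset.range n with (k : ℕ) < x, E.indicator (fun _ => (1 : ℝ)) k ≤ x + 1 :=
  calc ∑ k ∈ Finset.range n with (k : ℕ) < x, E.indicator (fun _ => (1 : ℝ)) k
      ≤ countBelow E ⌈x⌉₊ := by
        refine Finset.sum_le_sum_of_subset_of_nonneg (fun k hk => ?_)
          fun _ _ _ => Set.indicator_nonneg (fun _ _ => zero_le_one) _
        simpa using Nat.lt_ceil.mpr (Finset.mem_filter.mp hk).2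
    _ ≤ ⌈x⌉₊ := countBelow_le_self
    _ ≤ x + 1 := (Nat.ceil_lt_add_one hx).le

theorem exists_hasDensityZero_eventually_mem {E : ℕ → Set ℕ} (hmono : Monotone E)
    (hE : ∀ k, HasDensityZero (E k)) :
    ∃ F, HasDensityZero F ∧ ∀ k, ∀ᶠ n in atTop, n ∈ E k → n ∈ F := by
  classical
  let P : ℕ → ℕ → Prop := fun k n => ∀ m, n ≤ m → countBelow (E k) m ≤ m / (k + 1)
  have hP_zero (n : ℕ) : P 0 n := fun m _ => by simpa using countBelow_le_self
  have hP_eventually (k : ℕ) : ∀ᶠ n in atTop, P k n := by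
    refine eventually_forall_ge_atTop.mpr ?_
    filter_upwards [(hE k).eventually_le_const (show (0 : ℝ) < 1 / (k + 1) by positivity),
      eventually_gt_atTop 0] with m hm hm0
    rwa [div_le_iff₀ (by exact_mod_cast hm0), one_div_mul_eq_div] at hm
  -- `F` follows `E (K n)`, with `K n` the largest `k ≤ n` whose bound `P k` holds from `n` on;
  -- as `K` is monotone, `F ∩ [0, n) ⊆ E (K n)`.
  let K : ℕ → ℕ := fun n => Nat.findGreatest (fun k => P k n) n
  have hPK (n : ℕ) : P (K n) n :=
    Nat.findGreatest_spec (P := fun k => P k n) (Nat.zero_le n) (hP_zero n)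
  have hK_mono : Monotone K := fun n n' hnn' =>
    Nat.findGreatest_mono (fun _ h m hm => h m (hnn'.trans hm)) hnn'
  have hK_eventually (k : ℕ) : ∀ᶠ n in atTop, k ≤ K n := by
    filter_upwards [hP_eventually k, eventually_ge_atTop k] with n hn hkn
    exact Nat.le_findGreatest hkn hn
  refine ⟨{n | n ∈ E (K n)}, ?_, fun k => ?_⟩
  · have hcount (n : ℕ) : countBelow {n | n ∈ E (K n)} n / n ≤ 1 / (K n + 1) :=
      calc countBelow {n | n ∈ E (K n)} n / n ≤ n / (K n + 1) / n := by
            gcongr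
            exact (countBelow_le_countBelow fun m hm hmE => hmono (hK_mono hm.le) hmE).trans
              (hPK n n le_rfl)
        _ ≤ 1 / (K n + 1) := by
            rw [div_right_comm]; gcongr; exact div_self_le_one _
    exact tendsto_of_tendsto_of_tendsto_of_le_of_le tendsto_const_nhds
      (tendsto_one_div_add_atTop_nhds_zero_nat.comp (tendsto_atTop.mpr hK_eventually))
      (fun n => div_nonneg countBelow_nonneg n.cast_nonneg) hcount
  · filter_upwards [hK_eventually k] with n hkn hn
    exact hmono hkn hn

theorem tendstoZeroDensityOne_of_hasDensityZero {a : ℕ → ℝ} (ha : ∀ n, 0 ≤ a n)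
    (h : ∀ ε > 0, HasDensityZero {n | ε ≤ a n}) : TendstoZeroDensityOne a := by
  obtain ⟨F, hF, hEF⟩ := exists_hasDensityZero_eventually_mem
    (E := fun k : ℕ => {n | 1 / ((k : ℝ) + 1) ≤ a n})
    (fun j k hjk n (hn : 1 / ((j : ℝ) + 1) ≤ a n) => le_trans (by gcongr) hn)
    (fun k => h _ (by positivity))
  refine ⟨F, hF, tendsto_order.mpr ⟨fun b hb => ?_, fun ε hε => ?_⟩⟩
  · exact Eventually.filter_mono inf_le_left (Eventually.of_forall fun n => hb.trans_le (ha n))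
  · obtain ⟨k, hk⟩ := exists_nat_one_div_lt hε
    rw [eventually_inf_principal]
    filter_upwards [hEF k] with n hEn hnF
    by_contra! hεa
    exact hnF (hEn (hk.le.trans hεa))

noncomputable def weightedAverage (u : ℝ) (a : ℕ → ℝ) (n : ℕ) : ℝ :=
  (n : ℝ) ^ (-u) * ∑ i ∈ Finset.Icc 1 (n - 1), a i * (i : ℝ) ^ (u - 1)

section WeightedAverage

variable {u : ℝ} {a : ℕ → ℝ}

theorem weightedAverage_nonneg (ha : ∀ n, 0 ≤ a n) (n : ℕ) : 0 ≤ weightedAverage u a n :=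
  mul_nonneg (by positivity) <| Finset.sum_nonneg fun i _ =>
    mul_nonneg (ha i) (by positivity)

theorem weightedAverage_le (hu : 0 < u) {A : ℝ} (hA : 0 ≤ A) (ha : ∀ n, a n ≤ A) (n : ℕ) :
    weightedAverage u a n ≤ A / min 1 u := by
  rcases Nat.eq_zero_or_pos n with rfl | hn
  · simp [weightedAverage]; positivity
  have hn0 : (0 : ℝ) < n := by exact_mod_cast hn
  have hmin : 0 < min 1 u := lt_min one_pos hu
  have hsum : ∑ i ∈ Finset.Icc 1 (n - 1), a i * (i : ℝ) ^ (u - 1) ≤ A * (n ^ u / min 1 u) := by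
    calc ∑ i ∈ Finset.Icc 1 (n - 1), a i * (i : ℝ) ^ (u - 1)
        ≤ ∑ i ∈ Finset.Icc 1 (n - 1), A * (i : ℝ) ^ (u - 1) := by
          gcongr with i; exact ha i
      _ ≤ A * (n ^ u / min 1 u) := by
          rw [← Finset.mul_sum]
          gcongr
          rw [le_div_iff₀' hmin]
          calc _ ≤ ((n - 1 : ℕ) : ℝ) ^ u := min_one_mul_sum_Icc_rpow_le hu (n - 1)
            _ ≤ (n : ℝ) ^ u := by gcongr; exact Nat.sub_le n 1
  calc weightedAverage u a n ≤ (n : ℝ) ^ (-u) * (A * (n ^ u / min 1 u)) := by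
        unfold weightedAverage; gcongr
    _ = A / min 1 u := by
        rw [Real.rpow_neg hn0.le]; field_simp

theorem rpow_mul_weightedAverage {n : ℕ} (hn : 0 < n) :
    (n : ℝ) ^ u * weightedAverage u a n = ∑ i ∈ Finset.Icc 1 (n - 1), a i * (i : ℝ) ^ (u - 1) := by
  rw [weightedAverage, ← mul_assoc, ← Real.rpow_add (by exact_mod_cast hn), add_neg_cancel,
    Real.rpow_zero, one_mul]

theorem mul_sum_indicator_le_rpow_mul_weightedAverage (ha : ∀ n, 0 ≤ a n) {ε θ : ℝ} (hθ : 0 < θ)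
    {n : ℕ} (hn : 0 < n) :
    ε * min 1 (θ ^ (u - 1)) * (n : ℝ) ^ (u - 1) *
        ∑ k ∈ Finset.range n with ¬ (k : ℕ) < θ * n, {k | ε ≤ a k}.indicator (fun _ => 1) k ≤
      n ^ u * weightedAverage u a n := by
  have hn0 : (0 : ℝ) < n := by exact_mod_cast hn
  rw [rpow_mul_weightedAverage hn, Finset.mul_sum]
  have hlower {k : ℕ} (hk : k ∈ {k ∈ Finset.range n | ¬ (k : ℕ) < θ * n}) :
      0 < k ∧ k < n ∧ min 1 (θ ^ (u - 1)) * (n : ℝ) ^ (u - 1) ≤ (k : ℝ) ^ (u - 1) := by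
    obtain ⟨hkn, hθk⟩ := Finset.mem_filter.mp hk
    have hk0 : (0 : ℝ) < k := (by positivity : 0 < θ * n).trans_le (not_lt.mp hθk)
    have hkn : k < n := Finset.mem_range.mp hkn
    exact ⟨by exact_mod_cast hk0, hkn, min_one_rpow_mul_rpow_le_rpow hθ hn0.le hk0
      (not_lt.mp hθk) (by exact_mod_cast hkn.le)⟩
  calc ∑ k ∈ Finset.range n with ¬ (k : ℕ) < θ * n,
        ε * min 1 (θ ^ (u - 1)) * (n : ℝ) ^ (u - 1) * {k | ε ≤ a k}.indicator (fun _ => 1) k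
      ≤ ∑ k ∈ Finset.range n with ¬ (k : ℕ) < θ * n, a k * (k : ℝ) ^ (u - 1) := by
        refine Finset.sum_le_sum fun k hk => ?_
        by_cases hkE : ε ≤ a k
        · rw [Set.indicator_of_mem (show k ∈ {k | ε ≤ a k} from hkE), mul_one, mul_assoc]
          exact mul_le_mul hkE (hlower hk).2.2 (by positivity) (ha k)
        · rw [Set.indicator_of_notMem (show k ∉ {k | ε ≤ a k} from hkE), mul_zero]
          exact mul_nonneg (ha k) (by positivity)
    _ ≤ ∑ k ∈ Finset.Icc 1 (n - 1), a k * (k : ℝ) ^ (u - 1) := by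
        refine Finset.sum_le_sum_of_subset_of_nonneg (fun k hk => ?_)
          fun k _ _ => mul_nonneg (ha k) (by positivity)
        obtain ⟨hk0, hkn, -⟩ := hlower hk
        exact Finset.mem_Icc.mpr ⟨hk0, by omega⟩

theorem countBelow_le_of_weightedAverage (ha : ∀ n, 0 ≤ a n) {ε θ : ℝ} (hε : 0 < ε)
    (hθ : 0 < θ) {n : ℕ} (hn : 0 < n) :
    countBelow {k | ε ≤ a k} n ≤
      θ * n + 1 + n * weightedAverage u a n / (ε * min 1 (θ ^ (u - 1))) := by
  have hn0 : (0 : ℝ) < n := by exact_mod_cast hn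
  have hsmall := sum_indicator_filter_lt_le {k | ε ≤ a k} (by positivity : 0 ≤ θ * n) n
  have hlarge : ∑ k ∈ Finset.range n with ¬ (k : ℕ) < θ * n, {k | ε ≤ a k}.indicator (fun _ => 1) k
      ≤ n * weightedAverage u a n / (ε * min 1 (θ ^ (u - 1))) := by
    have hpow : (n : ℝ) ^ u = n * n ^ (u - 1) := by
      rw [mul_comm, ← Real.rpow_add_one hn0.ne']; ring_nf
    rw [le_div_iff₀ (by positivity)]
    refine le_of_mul_le_mul_left ?_ (by positivity : (0 : ℝ) < n ^ (u - 1))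
    linear_combination mul_sum_indicator_le_rpow_mul_weightedAverage (u := u) (ε := ε) ha hθ hn +
      weightedAverage u a n * hpow
  rw [countBelow, ← Finset.sum_filter_add_sum_filter_not _ (fun k : ℕ => (k : ℝ) < θ * n)]
  linarith

theorem hasDensityZero_of_tendsto_weightedAverage (ha : ∀ n, 0 ≤ a n)
    (hS : Tendsto (weightedAverage u a) atTop (𝓝 0)) {ε : ℝ} (hε : 0 < ε) :
    HasDensityZero {n | ε ≤ a n} := by
  rw [hasDensityZero_iff, tendsto_order]
  refine ⟨fun b hb => Eventually.of_forall fun n =>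
    hb.trans_le (div_nonneg countBelow_nonneg n.cast_nonneg), fun η hη => ?_⟩
  have hθ : 0 < η / 2 := by positivity
  have hbound : Tendsto (fun n : ℕ => η / 2 + 1 / (n : ℝ) +
      weightedAverage u a n / (ε * min 1 ((η / 2) ^ (u - 1)))) atTop
      (𝓝 (η / 2 + 0 + 0 / (ε * min 1 ((η / 2) ^ (u - 1))))) :=
    (tendsto_const_nhds.add tendsto_one_div_atTop_nhds_zero_nat).add (hS.div_const _)
  have hlim_lt : η / 2 + 0 + 0 / (ε * min 1 ((η / 2) ^ (u - 1))) < η := by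
    rw [zero_div, add_zero, add_zero]; linarith
  filter_upwards [hbound.eventually_lt_const hlim_lt, eventually_gt_atTop 0] with n hlt hn
  calc countBelow {k | ε ≤ a k} n / n
      ≤ (η / 2 * n + 1 + n * weightedAverage u a n / (ε * min 1 ((η / 2) ^ (u - 1)))) / n := by
        gcongr; exact countBelow_le_of_weightedAverage ha hε hθ hn
    _ = η / 2 + 1 / n + weightedAverage u a n / (ε * min 1 ((η / 2) ^ (u - 1))) := by
        field_simp
    _ < η := hlt

end WeightedAverage

theorem tendsto_zero_of_limsup_nonpos {f : ℕ → ℝ} {C : ℝ} (hf0 : ∀ n, 0 ≤ f n)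
    (hfC : ∀ n, f n ≤ C) (h : limsup f atTop ≤ 0) : Tendsto f atTop (𝓝 0) :=
  tendsto_of_le_liminf_of_limsup_le
    (le_liminf_of_le (isCoboundedUnder_ge_of_le atTop hfC) (Eventually.of_forall hf0)) h
    (isBoundedUnder_of ⟨C, hfC⟩) (isBoundedUnder_of ⟨0, hf0⟩)

/-- For `u > 0`, if `(a_n)` is a bounded nonnegative sequence that does NOT converge to 0
with density 1, then `limsup_n n^{-u} Σ_{i=1}^{n-1} a_i i^{u-1} > 0`. -/
theorem stmt_12 (u : ℝ) (hu : 0 < u) (a : ℕ → ℝ)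
    (ha_nonneg : ∀ n, 0 ≤ a n) (A : ℝ) (ha_bdd : ∀ n, a n ≤ A)
    (h : ¬ TendstoZeroDensityOne a) :
    0 < Filter.limsup (fun n : ℕ =>
        (n : ℝ) ^ (-u) * ∑ i ∈ Finset.Icc 1 (n - 1), a i * (i : ℝ) ^ (u - 1)) atTop := by
  by_contra! hle
  have hA : 0 ≤ A := (ha_nonneg 0).trans (ha_bdd 0)
  have hS : Tendsto (weightedAverage u a) atTop (𝓝 0) :=
    tendsto_zero_of_limsup_nonpos (weightedAverage_nonneg ha_nonneg)
      (weightedAverage_le hu hA ha_bdd) hle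
  exact h (tendstoZeroDensityOne_of_hasDensityZero ha_nonneg fun ε hε =>
    hasDensityZero_of_tendsto_weightedAverage ha_nonneg hS hε)
end
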